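/- KM update postulate U6 holds for PEKB belief update on consistent PEKBs: for all consistent PEKBs P, Q, R, if P ⋄ Q ⊨ R and P ⋄ R ⊨ Q, then P ⋄ Q ≡ P ⋄ R. -/

import Mathlib

/-- Modal formulae over atomic propositions `Atom` and agents `Agt`. -/
inductive Form (Atom Agt : Type) : Type
  | top : Form Atom Agt
  | bot : Form Atom Agt
  | atom : Atom → Form Atom Agt
  | neg : Form Atom Agt → Form Atom Agt
  | and : Form Atom Agt → Form Atom Agt → Form Atom Agt
  | box : Agt → Form Atom Agt → Form Atom Agt

/-- `◇_i φ` abbreviates `¬ B_i ¬ φ`. -/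
def Form.dia {Atom Agt : Type} (i : Agt) (φ : Form Atom Agt) : Form Atom Agt :=
  Form.neg (Form.box i (Form.neg φ))

/-- A Kripke structure: worlds, a valuation, and an accessibility relation per agent. -/
structure Kripke (Atom Agt : Type) where
  W : Type
  val : W → Atom → Prop
  R : Agt → W → W → Prop

/-- Every accessibility relation is serial: every world has a successor. -/
def Kripke.Serial {Atom Agt : Type} (M : Kripke Atom Agt) : Prop :=
  ∀ (i : Agt) (w : M.W), ∃ v : M.W, M.R i w v

/-- Satisfaction of a formula at a world of a Kripke structure. -/
def Sat {Atom Agt : Type} (M : Kripke Atom Agt) : M.W → Form Atom Agt → Prop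
  | _, Form.top => True
  | _, Form.bot => False
  | w, Form.atom p => M.val w p
  | w, Form.neg φ => ¬ Sat M w φ
  | w, Form.and φ ψ => Sat M w φ ∧ Sat M w ψ
  | w, Form.box i φ => ∀ v : M.W, M.R i w v → Sat M v φ

/-- KD_n entailment from a set of formulae: truth at every world of every serial
Kripke structure satisfying all members of `S`. -/
def SetEntails {Atom Agt : Type} (S : Set (Form Atom Agt)) (φ : Form Atom Agt) : Prop :=
  ∀ (M : Kripke Atom Agt), M.Serial → ∀ w : M.W, (∀ ψ ∈ S, Sat M w ψ) → Sat M w φ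

/-- KD_n entailment between single formulae. -/
def Entails {Atom Agt : Type} (φ ψ : Form Atom Agt) : Prop :=
  SetEntails {φ} ψ

/-- A set of formulae is consistent iff all its members hold simultaneously at
some world of some serial Kripke structure. -/
def Consistent {Atom Agt : Type} (S : Set (Form Atom Agt)) : Prop :=
  ∃ (M : Kripke Atom Agt), M.Serial ∧ ∃ w : M.W, ∀ ψ ∈ S, Sat M w ψ

/-- Restricted modal literals: a (possibly empty) sequence of `B_i`/`◇_i`
operators applied to a propositional literal. -/
inductive IsRML {Atom Agt : Type} : Form Atom Agt → Prop
  | pos (p : Atom) : IsRML (Form.atom p)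
  | neg (p : Atom) : IsRML (Form.neg (Form.atom p))
  | box (i : Agt) {φ : Form Atom Agt} : IsRML φ → IsRML (Form.box i φ)
  | dia (i : Agt) {φ : Form Atom Agt} : IsRML φ → IsRML (Form.dia i φ)

/-- A proper epistemic knowledge base: a finite set of RMLs. -/
def IsPEKB {Atom Agt : Type} (S : Set (Form Atom Agt)) : Prop :=
  S.Finite ∧ ∀ φ ∈ S, IsRML φ

/-- Entailment of every member of a set (PEKB) from a set. -/
def KBEntails {Atom Agt : Type} (S T : Set (Form Atom Agt)) : Prop :=
  ∀ φ ∈ T, SetEntails S φ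

/-- Logical equivalence of two sets of formulae. -/
def KBEquiv {Atom Agt : Type} (S T : Set (Form Atom Agt)) : Prop :=
  KBEntails S T ∧ KBEntails T S

/-- Upward closure: the RMLs entailed by some member of `S`. -/
def upSet {Atom Agt : Type} (S : Set (Form Atom Agt)) : Set (Form Atom Agt) :=
  {ψ | IsRML ψ ∧ ∃ φ ∈ S, Entails φ ψ}

/-- Downward closure: the RMLs entailing some member of `S`. -/
def downSet {Atom Agt : Type} (S : Set (Form Atom Agt)) : Set (Form Atom Agt) :=
  {ψ | IsRML ψ ∧ ∃ φ ∈ S, Entails ψ φ}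

/-- Maximal elements of a set of RMLs under entailment. -/
def maxSet {Atom Agt : Type} (S : Set (Form Atom Agt)) : Set (Form Atom Agt) :=
  {φ ∈ S | ∀ ψ ∈ S, Entails ψ φ → Entails φ ψ}

/-- NNF-negation of an RML: push the negation through the modalities. -/
def nnfNeg {Atom Agt : Type} : Form Atom Agt → Form Atom Agt
  | Form.atom p => Form.neg (Form.atom p)
  | Form.neg (Form.atom p) => Form.atom p
  | Form.neg (Form.box i (Form.neg φ)) => Form.box i (nnfNeg φ)
  | Form.box i φ => Form.dia i (nnfNeg φ)
  | φ => φ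

/-- NNF-negation of every member of a PEKB. -/
def negKB {Atom Agt : Type} (S : Set (Form Atom Agt)) : Set (Form Atom Agt) :=
  nnfNeg '' S

/-- Belief erasure: `P ⊖ Q = max(↑P ∖ ↓Q)`. -/
def eraseKB {Atom Agt : Type} (P Q : Set (Form Atom Agt)) : Set (Form Atom Agt) :=
  maxSet (upSet P \ downSet Q)

/-- Belief update: `P ⋄ Q = max((P ⊖ ¬Q) ∪ Q)`. -/
def updateKB {Atom Agt : Type} (P Q : Set (Form Atom Agt)) : Set (Form Atom Agt) :=
  maxSet (eraseKB P (negKB Q) ∪ Q)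

/-- Meet: `P ⊓ Q = max(↑P ∩ ↑Q)`. -/
def meetKB {Atom Agt : Type} (P Q : Set (Form Atom Agt)) : Set (Form Atom Agt) :=
  maxSet (upSet P ∩ upSet Q)



section Aux

variable {Atom Agt : Type}

open Form

lemma entails_def {φ ψ : Form Atom Agt} :
    Entails φ ψ ↔ ∀ M : Kripke Atom Agt, M.Serial → ∀ w, Sat M w φ → Sat M w ψ := by
  constructor
  · intro h M hs w hφ
    exact h M hs w (by intro χ hχ; rw [Set.mem_singleton_iff] at hχ; subst hχ; exact hφ)
  · intro h M hs w hall
    exact h M hs w (hall φ rfl)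

lemma not_entails {φ ψ : Form Atom Agt} (h : ¬ Entails φ ψ) :
    ∃ M : Kripke Atom Agt, M.Serial ∧ ∃ w, Sat M w φ ∧ ¬ Sat M w ψ := by
  rw [entails_def] at h
  push_neg at h
  obtain ⟨M, hs, w, h1, h2⟩ := h
  exact ⟨M, hs, w, h1, h2⟩

lemma entails_refl (φ : Form Atom Agt) : Entails φ φ :=
  entails_def.2 (fun _ _ _ h => h)

lemma entails_trans {φ ψ χ : Form Atom Agt} (h1 : Entails φ ψ) (h2 : Entails ψ χ) :
    Entails φ χ :=
  entails_def.2 (fun M hs w h => entails_def.1 h2 M hs w (entails_def.1 h1 M hs w h))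

lemma nnfNeg_isRML {φ : Form Atom Agt} (h : IsRML φ) : IsRML (nnfNeg φ) := by
  induction h with
  | pos p => exact IsRML.neg p
  | neg p => exact IsRML.pos p
  | box i h ih => exact IsRML.dia i ih
  | dia i h ih => exact IsRML.box i ih

lemma nnfNeg_sat {φ : Form Atom Agt} (h : IsRML φ) (M : Kripke Atom Agt) (w : M.W) :
    Sat M w (nnfNeg φ) ↔ ¬ Sat M w φ := by
  induction h generalizing w with
  | pos p => simp [nnfNeg, Sat]
  | neg p => simp [nnfNeg, Sat]
  | box i h ih =>
    show Sat M w (Form.dia i (nnfNeg _)) ↔ _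
    simp only [Form.dia, Sat]
    push_neg
    constructor
    · rintro ⟨v, hv, hnv⟩
      exact ⟨v, hv, (ih v).1 hnv⟩
    · rintro hna
      obtain ⟨v, hv, hnv⟩ := hna
      exact ⟨v, hv, (ih v).2 hnv⟩
  | dia i h ih =>
    show Sat M w (Form.box i (nnfNeg _)) ↔ ¬ Sat M w (Form.dia i _)
    simp only [Form.dia, Sat]
    push_neg
    constructor
    · intro hall v hv
      exact (ih v).1 (hall v hv)
    · intro hall v hv
      exact (ih v).2 (hall v hv)

end Aux

section Combine

variable {Atom Agt : Type}

/-- Two serial models glued under a fresh root: agent `j` points from the root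
to `w₁` in `M₁`, every other agent points to `w₂` in `M₂`. -/
def combine (M₁ M₂ : Kripke Atom Agt) (w₁ : M₁.W) (w₂ : M₂.W) (j : Agt)
    (v₀ : Atom → Prop) : Kripke Atom Agt where
  W := Option (M₁.W ⊕ M₂.W)
  val := fun w p => match w with
    | none => v₀ p
    | some (Sum.inl u) => M₁.val u p
    | some (Sum.inr u) => M₂.val u p
  R := fun i w v => match w, v with
    | none, some (Sum.inl u) => i = j ∧ u = w₁
    | none, some (Sum.inr u) => i ≠ j ∧ u = w₂
    | some (Sum.inl u), some (Sum.inl u') => M₁.R i u u'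
    | some (Sum.inr u), some (Sum.inr u') => M₂.R i u u'
    | _, _ => False

variable {M₁ M₂ : Kripke Atom Agt} {w₁ : M₁.W} {w₂ : M₂.W} {j : Agt} {v₀ : Atom → Prop}

lemma combine_serial (h₁ : M₁.Serial) (h₂ : M₂.Serial) :
    (combine M₁ M₂ w₁ w₂ j v₀).Serial := by
  intro i w
  match w with
  | none =>
    by_cases hij : i = j
    · exact ⟨some (Sum.inl w₁), hij, rfl⟩
    · exact ⟨some (Sum.inr w₂), hij, rfl⟩
  | some (Sum.inl u) =>
    obtain ⟨v, hv⟩ := h₁ i u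
    exact ⟨some (Sum.inl v), hv⟩
  | some (Sum.inr u) =>
    obtain ⟨v, hv⟩ := h₂ i u
    exact ⟨some (Sum.inr v), hv⟩

lemma combine_sat_left (θ : Form Atom Agt) (u : M₁.W) :
    Sat (combine M₁ M₂ w₁ w₂ j v₀) (some (Sum.inl u)) θ ↔ Sat M₁ u θ := by
  induction θ generalizing u with
  | top => simp [Sat]
  | bot => simp [Sat]
  | atom p => simp [Sat, combine]
  | neg φ ih => simp [Sat, ih]
  | and φ ψ ih1 ih2 => simp [Sat, ih1, ih2]
  | box i φ ih =>
    constructor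
    · intro h v hv
      exact (ih v).1 (h (some (Sum.inl v)) hv)
    · intro h v hv
      match v, hv with
      | some (Sum.inl v'), hv => exact (ih v').2 (h v' hv)
    
lemma combine_sat_right (θ : Form Atom Agt) (u : M₂.W) :
    Sat (combine M₁ M₂ w₁ w₂ j v₀) (some (Sum.inr u)) θ ↔ Sat M₂ u θ := by
  induction θ generalizing u with
  | top => simp [Sat]
  | bot => simp [Sat]
  | atom p => simp [Sat, combine]
  | neg φ ih => simp [Sat, ih]
  | and φ ψ ih1 ih2 => simp [Sat, ih1, ih2]
  | box i φ ih =>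
    constructor
    · intro h v hv
      exact (ih v).1 (h (some (Sum.inr v)) hv)
    · intro h v hv
      match v, hv with
      | some (Sum.inr v'), hv => exact (ih v').2 (h v' hv)

lemma combine_root_box_eq {i : Agt} (hij : i = j) (θ : Form Atom Agt) :
    Sat (combine M₁ M₂ w₁ w₂ j v₀) none (Form.box i θ) ↔ Sat M₁ w₁ θ := by
  constructor
  · intro h
    exact (combine_sat_left θ w₁).1 (h (some (Sum.inl w₁)) ⟨hij, rfl⟩)
  · intro h v hv
    match v, hv with
    | some (Sum.inl u), hv =>
      obtain ⟨_, rfl⟩ := hv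
      exact (combine_sat_left θ _).2 h
    | some (Sum.inr u), hv => exact absurd hij hv.1

lemma combine_root_box_ne {i : Agt} (hij : i ≠ j) (θ : Form Atom Agt) :
    Sat (combine M₁ M₂ w₁ w₂ j v₀) none (Form.box i θ) ↔ Sat M₂ w₂ θ := by
  constructor
  · intro h
    exact (combine_sat_right θ w₂).1 (h (some (Sum.inr w₂)) ⟨hij, rfl⟩)
  · intro h v hv
    match v, hv with
    | some (Sum.inl u), hv => exact absurd hv.1 hij
    | some (Sum.inr u), hv =>
      obtain ⟨_, rfl⟩ := hv
      exact (combine_sat_right θ _).2 h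

lemma combine_root_dia_eq {i : Agt} (hij : i = j) (θ : Form Atom Agt) :
    Sat (combine M₁ M₂ w₁ w₂ j v₀) none (Form.dia i θ) ↔ Sat M₁ w₁ θ := by
  show (¬ Sat (combine M₁ M₂ w₁ w₂ j v₀) none (Form.box i (Form.neg θ))) ↔ _
  rw [combine_root_box_eq hij]
  show ¬ ¬ _ ↔ _
  exact not_not

lemma combine_root_dia_ne {i : Agt} (hij : i ≠ j) (θ : Form Atom Agt) :
    Sat (combine M₁ M₂ w₁ w₂ j v₀) none (Form.dia i θ) ↔ Sat M₂ w₂ θ := by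
  show (¬ Sat (combine M₁ M₂ w₁ w₂ j v₀) none (Form.box i (Form.neg θ))) ↔ _
  rw [combine_root_box_ne hij]
  show ¬ ¬ _ ↔ _
  exact not_not

lemma combine_root_atom (p : Atom) :
    Sat (combine M₁ M₂ w₁ w₂ j v₀) none (Form.atom p) ↔ v₀ p := Iff.rfl

/-- Every RML is satisfiable in a serial model. -/
lemma rml_consistent {φ : Form Atom Agt} (h : IsRML φ) :
    ∃ M : Kripke Atom Agt, M.Serial ∧ ∃ w : M.W, Sat M w φ := by
  induction h with
  | pos p =>
    exact ⟨⟨Unit, fun _ _ => True, fun _ _ _ => True⟩, fun i w => ⟨(), trivial⟩, (),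
      trivial⟩
  | neg p =>
    refine ⟨⟨Unit, fun _ _ => False, fun _ _ _ => True⟩, fun i w => ⟨(), trivial⟩, (), ?_⟩
    exact fun h => h
  | box i h ih =>
    obtain ⟨M, hs, w, hw⟩ := ih
    refine ⟨combine M M w w i (fun _ => True), combine_serial hs hs, none, ?_⟩
    exact (combine_root_box_eq rfl _).2 hw
  | dia i h ih =>
    obtain ⟨M, hs, w, hw⟩ := ih
    refine ⟨combine M M w w i (fun _ => True), combine_serial hs hs, none, ?_⟩
    exact (combine_root_dia_eq rfl _).2 hw

end Combine

section Shades

variable {Atom Agt : Type}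

/-- The finite set of RMLs with the same "shape" (agent sequence + literal). -/
def shades : Form Atom Agt → Set (Form Atom Agt)
  | Form.atom p => {Form.atom p}
  | Form.neg (Form.atom p) => {Form.neg (Form.atom p)}
  | Form.neg (Form.box i (Form.neg φ)) => (Form.box i) '' shades φ ∪ (Form.dia i) '' shades φ
  | Form.box i φ => (Form.box i) '' shades φ ∪ (Form.dia i) '' shades φ
  | _ => ∅

lemma shades_finite {φ : Form Atom Agt} (h : IsRML φ) : (shades φ).Finite := by
  induction h with
  | pos p => exact Set.finite_singleton _
  | neg p => exact Set.finite_singleton _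
  | box i h ih =>
    show (_ ∪ _ : Set _).Finite
    exact (ih.image _).union (ih.image _)
  | dia i h ih =>
    show (_ ∪ _ : Set _).Finite
    exact (ih.image _).union (ih.image _)

lemma entails_mem_shades {ψ φ : Form Atom Agt} (hψ : IsRML ψ) (hφ : IsRML φ)
    (h : Entails ψ φ) : ψ ∈ shades φ := by
  induction hφ generalizing ψ with
  | pos p =>
    cases hψ with
    | pos q =>
      by_cases hpq : q = p
      · subst hpq; exact rfl
      · exfalso
        have := entails_def.1 h ⟨Unit, fun _ r => r = q, fun _ _ _ => True⟩
          (fun i w => ⟨(), trivial⟩) () rfl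
        exact hpq this.symm
    | neg q =>
      exfalso
      have := entails_def.1 h ⟨Unit, fun _ _ => False, fun _ _ _ => True⟩
        (fun i w => ⟨(), trivial⟩) () (fun hf => hf)
      exact this
    | @box i ρ hρ =>
      exfalso
      obtain ⟨M, hs, w, hw⟩ := rml_consistent hρ
      have := entails_def.1 h (combine M M w w i (fun _ => False))
        (combine_serial hs hs) none ((combine_root_box_eq rfl ρ).2 hw)
      exact this
    | @dia i ρ hρ =>
      exfalso
      obtain ⟨M, hs, w, hw⟩ := rml_consistent hρ
      have := entails_def.1 h (combine M M w w i (fun _ => False))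
        (combine_serial hs hs) none ((combine_root_dia_eq rfl ρ).2 hw)
      exact this
  | neg p =>
    cases hψ with
    | pos q =>
      exfalso
      have := entails_def.1 h ⟨Unit, fun _ _ => True, fun _ _ _ => True⟩
        (fun i w => ⟨(), trivial⟩) () trivial
      exact this trivial
    | neg q =>
      by_cases hpq : q = p
      · subst hpq; exact rfl
      · exfalso
        have := entails_def.1 h ⟨Unit, fun _ r => r ≠ q, fun _ _ _ => True⟩
          (fun i w => ⟨(), trivial⟩) () (fun hf => hf rfl)
        exact this (Ne.symm hpq)
    | @box i ρ hρ =>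
      exfalso
      obtain ⟨M, hs, w, hw⟩ := rml_consistent hρ
      have := entails_def.1 h (combine M M w w i (fun _ => True))
        (combine_serial hs hs) none ((combine_root_box_eq rfl ρ).2 hw)
      exact this trivial
    | @dia i ρ hρ =>
      exfalso
      obtain ⟨M, hs, w, hw⟩ := rml_consistent hρ
      have := entails_def.1 h (combine M M w w i (fun _ => True))
        (combine_serial hs hs) none ((combine_root_dia_eq rfl ρ).2 hw)
      exact this trivial
  | @box i χ hχ ih =>
    obtain ⟨M₂, hs₂, w₂, hw₂'⟩ := rml_consistent (nnfNeg_isRML hχ)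
    have hw₂ : ¬ Sat M₂ w₂ χ := (nnfNeg_sat hχ M₂ w₂).1 hw₂'
    cases hψ with
    | pos q =>
      exfalso
      have := entails_def.1 h (combine M₂ M₂ w₂ w₂ i (fun r => r = q))
        (combine_serial hs₂ hs₂) none rfl
      exact hw₂ ((combine_root_box_eq rfl χ).1 this)
    | neg q =>
      exfalso
      have := entails_def.1 h (combine M₂ M₂ w₂ w₂ i (fun _ => False))
        (combine_serial hs₂ hs₂) none (fun hf => hf)
      exact hw₂ ((combine_root_box_eq rfl χ).1 this)
    | @box k ρ hρ =>
      by_cases hk : k = i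
      · subst hk
        have hρχ : Entails ρ χ := by
          by_contra hn
          obtain ⟨M, hs, w, hρw, hχw⟩ := not_entails hn
          have := entails_def.1 h (combine M M w w k (fun _ => True))
            (combine_serial hs hs) none ((combine_root_box_eq rfl ρ).2 hρw)
          exact hχw ((combine_root_box_eq rfl χ).1 this)
        exact Or.inl ⟨ρ, ih hρ hρχ, rfl⟩
      · exfalso
        obtain ⟨M₁, hs₁, w₁, hw₁⟩ := rml_consistent hρ
        have := entails_def.1 h (combine M₁ M₂ w₁ w₂ k (fun _ => True))
          (combine_serial hs₁ hs₂) none ((combine_root_box_eq rfl ρ).2 hw₁)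
        exact hw₂ ((combine_root_box_ne (Ne.symm hk) χ).1 this)
    | @dia k ρ hρ =>
      by_cases hk : k = i
      · subst hk
        have hρχ : Entails ρ χ := by
          by_contra hn
          obtain ⟨M, hs, w, hρw, hχw⟩ := not_entails hn
          have := entails_def.1 h (combine M M w w k (fun _ => True))
            (combine_serial hs hs) none ((combine_root_dia_eq rfl ρ).2 hρw)
          exact hχw ((combine_root_box_eq rfl χ).1 this)
        exact Or.inr ⟨ρ, ih hρ hρχ, rfl⟩
      · exfalso
        obtain ⟨M₁, hs₁, w₁, hw₁⟩ := rml_consistent hρ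
        have := entails_def.1 h (combine M₁ M₂ w₁ w₂ k (fun _ => True))
          (combine_serial hs₁ hs₂) none ((combine_root_dia_eq rfl ρ).2 hw₁)
        exact hw₂ ((combine_root_box_ne (Ne.symm hk) χ).1 this)
  | @dia i χ hχ ih =>
    obtain ⟨M₂, hs₂, w₂, hw₂'⟩ := rml_consistent (nnfNeg_isRML hχ)
    have hw₂ : ¬ Sat M₂ w₂ χ := (nnfNeg_sat hχ M₂ w₂).1 hw₂'
    have hsh : shades (Form.dia i χ) =
        (Form.box i) '' shades χ ∪ (Form.dia i) '' shades χ := rfl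
    rw [hsh]
    cases hψ with
    | pos q =>
      exfalso
      have := entails_def.1 h (combine M₂ M₂ w₂ w₂ i (fun r => r = q))
        (combine_serial hs₂ hs₂) none rfl
      exact hw₂ ((combine_root_dia_eq rfl χ).1 this)
    | neg q =>
      exfalso
      have := entails_def.1 h (combine M₂ M₂ w₂ w₂ i (fun _ => False))
        (combine_serial hs₂ hs₂) none (fun hf => hf)
      exact hw₂ ((combine_root_dia_eq rfl χ).1 this)
    | @box k ρ hρ =>
      by_cases hk : k = i
      · subst hk
        have hρχ : Entails ρ χ := by
          by_contra hn
          obtain ⟨M, hs, w, hρw, hχw⟩ := not_entails hn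
          have := entails_def.1 h (combine M M w w k (fun _ => True))
            (combine_serial hs hs) none ((combine_root_box_eq rfl ρ).2 hρw)
          exact hχw ((combine_root_dia_eq rfl χ).1 this)
        exact Or.inl ⟨ρ, ih hρ hρχ, rfl⟩
      · exfalso
        obtain ⟨M₁, hs₁, w₁, hw₁⟩ := rml_consistent hρ
        have := entails_def.1 h (combine M₁ M₂ w₁ w₂ k (fun _ => True))
          (combine_serial hs₁ hs₂) none ((combine_root_box_eq rfl ρ).2 hw₁)
        exact hw₂ ((combine_root_dia_ne (Ne.symm hk) χ).1 this)
    | @dia k ρ hρ =>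
      by_cases hk : k = i
      · subst hk
        have hρχ : Entails ρ χ := by
          by_contra hn
          obtain ⟨M, hs, w, hρw, hχw⟩ := not_entails hn
          have := entails_def.1 h (combine M M w w k (fun _ => True))
            (combine_serial hs hs) none ((combine_root_dia_eq rfl ρ).2 hρw)
          exact hχw ((combine_root_dia_eq rfl χ).1 this)
        exact Or.inr ⟨ρ, ih hρ hρχ, rfl⟩
      · exfalso
        obtain ⟨M₁, hs₁, w₁, hw₁⟩ := rml_consistent hρ
        have := entails_def.1 h (combine M₁ M₂ w₁ w₂ k (fun _ => True))
          (combine_serial hs₁ hs₂) none ((combine_root_dia_eq rfl ρ).2 hw₁)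
        exact hw₂ ((combine_root_dia_ne (Ne.symm hk) χ).1 this)

end Shades

section MaxSet

variable {Atom Agt : Type}

/-- The preorder on formulae where `a ≤ b` iff `b` entails `a`. -/
def entailsPreorder : Preorder (Form Atom Agt) where
  le a b := Entails b a
  le_refl a := entails_refl a
  le_trans a b c h1 h2 := entails_trans h2 h1

/-- Every member of a set of RMLs is entailed by a maximal member. -/
lemma exists_max_entails {S : Set (Form Atom Agt)} (hS : ∀ χ ∈ S, IsRML χ)
    {φ : Form Atom Agt} (hφ : φ ∈ S) : ∃ ψ ∈ maxSet S, Entails ψ φ := by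
  classical
  have hφR : IsRML φ := hS φ hφ
  set T : Set (Form Atom Agt) := {ψ ∈ S | Entails ψ φ} with hT
  have hTsub : T ⊆ shades φ := by
    rintro ψ ⟨hψS, hψe⟩
    exact entails_mem_shades (hS ψ hψS) hφR hψe
  have hTfin : T.Finite := (shades_finite hφR).subset hTsub
  letI : Preorder (Form Atom Agt) := entailsPreorder
  obtain ⟨m, hmT, hmax⟩ := hTfin.toFinset.exists_maximal
    (by rw [Set.Finite.toFinset_nonempty]; exact ⟨φ, hφ, entails_refl φ⟩)
  rw [Set.Finite.mem_toFinset] at hmT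
  obtain ⟨hmS, hmφ⟩ := hmT
  refine ⟨m, ⟨hmS, ?_⟩, hmφ⟩
  intro χ hχS hχm
  by_contra hmχ
  exact hmχ (hmax (hTfin.mem_toFinset.2 ⟨hχS, entails_trans hχm hmφ⟩) hχm)

lemma setEntails_of_mem {S : Set (Form Atom Agt)} {φ : Form Atom Agt} (h : φ ∈ S) :
    SetEntails S φ := fun _ _ w hw => hw φ h

lemma kbEntails_trans' {S T : Set (Form Atom Agt)} {φ : Form Atom Agt}
    (h1 : KBEntails S T) (h2 : SetEntails T φ) : SetEntails S φ := by
  intro M hs w hw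
  exact h2 M hs w (fun ψ hψ => h1 ψ hψ M hs w hw)

lemma maxSet_subset (S : Set (Form Atom Agt)) : maxSet S ⊆ S := fun _ h => h.1

/-- `maxSet S` entails `S` when `S` consists of RMLs. -/
lemma kbEntails_maxSet {S : Set (Form Atom Agt)} (hS : ∀ χ ∈ S, IsRML χ) :
    KBEntails (maxSet S) S := by
  intro φ hφ
  obtain ⟨ψ, hψ, hent⟩ := exists_max_entails hS hφ
  intro M hs w hw
  exact entails_def.1 hent M hs w (hw ψ hψ)

end MaxSet

section Canon

variable {Atom Agt : Type}

/-- Pairwise consistency of a set of RMLs. -/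
def Good (S : Set (Form Atom Agt)) : Prop :=
  (∀ φ ∈ S, IsRML φ) ∧
  ∀ a ∈ S, ∀ b ∈ S, ∃ M : Kripke Atom Agt, M.Serial ∧ ∃ w, Sat M w a ∧ Sat M w b

/-- The canonical model on sets of formulae. -/
@[reducible] def canonM (Atom Agt : Type) : Kripke Atom Agt where
  W := Set (Form Atom Agt)
  val := fun S p => Form.atom p ∈ S
  R := fun i S T => T = {φ | Form.box i φ ∈ S} ∨
    ∃ ψ, Form.dia i ψ ∈ S ∧ T = insert ψ {φ | Form.box i φ ∈ S}

lemma canonM_serial : (canonM Atom Agt).Serial :=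
  fun i S => ⟨{φ | Form.box i φ ∈ S}, Or.inl rfl⟩

lemma isRML_of_box {i : Agt} {φ : Form Atom Agt} (h : IsRML (Form.box i φ)) : IsRML φ := by
  cases h with
  | box _ h => exact h

lemma isRML_of_dia {i : Agt} {φ : Form Atom Agt} (h : IsRML (Form.dia i φ)) : IsRML φ := by
  rw [Form.dia] at h
  cases h with
  | dia _ h' => exact h'

lemma good_step {S T : Set (Form Atom Agt)} {i : Agt} (hG : Good S)
    (hR : (canonM Atom Agt).R i S T) : Good T := by
  obtain ⟨hRML, hpair⟩ := hG
  have hwit : ∀ a b : Form Atom Agt, Form.dia i a ∈ S → Form.box i b ∈ S →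
      ∃ M : Kripke Atom Agt, M.Serial ∧ ∃ v, Sat M v a ∧ Sat M v b := by
    intro a b ha hb
    obtain ⟨M, hs, w, hwa, hwb⟩ := hpair _ ha _ hb
    rw [Form.dia] at hwa
    have hwa' : ¬ ∀ v, M.R i w v → ¬ Sat M v a := hwa
    push_neg at hwa'
    obtain ⟨v, hv, hva⟩ := hwa'
    exact ⟨M, hs, v, hva, hwb v hv⟩
  have hboxpair : ∀ a b : Form Atom Agt, Form.box i a ∈ S → Form.box i b ∈ S →
      ∃ M : Kripke Atom Agt, M.Serial ∧ ∃ v, Sat M v a ∧ Sat M v b := by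
    intro a b ha hb
    obtain ⟨M, hs, w, hwa, hwb⟩ := hpair _ ha _ hb
    obtain ⟨v, hv⟩ := hs i w
    exact ⟨M, hs, v, hwa v hv, hwb v hv⟩
  have hmem : ∀ φ ∈ T, Form.box i φ ∈ S ∨ Form.dia i φ ∈ S := by
    intro φ hφ
    rcases hR with rfl | ⟨ψ, hψ, rfl⟩
    · exact Or.inl hφ
    · rw [Set.mem_insert_iff] at hφ
      rcases hφ with rfl | hφ
      · exact Or.inr hψ
      · exact Or.inl hφ
  constructor
  · intro φ hφ
    rcases hmem φ hφ with h | h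
    · exact isRML_of_box (hRML _ h)
    · exact isRML_of_dia (hRML _ h)
  · intro a ha b hb
    rcases hR with rfl | ⟨ψ, hψ, rfl⟩
    · exact hboxpair a b ha hb
    · rw [Set.mem_insert_iff] at ha hb
      have hself : ∃ M : Kripke Atom Agt, M.Serial ∧ ∃ v, Sat M v ψ := by
        obtain ⟨M, hs, w, hwa, _⟩ := hpair _ hψ _ hψ
        rw [Form.dia] at hwa
        have hwa' : ¬ ∀ v, M.R i w v → ¬ Sat M v ψ := hwa
        push_neg at hwa'
        obtain ⟨v, hv, hva⟩ := hwa'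
        exact ⟨M, hs, v, hva⟩
      rcases ha with rfl | ha
      · rcases hb with rfl | hb
        · obtain ⟨M, hs, v, hv⟩ := hself
          exact ⟨M, hs, v, hv, hv⟩
        · exact hwit _ _ hψ hb
      · rcases hb with rfl | hb
        · obtain ⟨M, hs, v, h1, h2⟩ := hwit _ _ hψ ha
          exact ⟨M, hs, v, h2, h1⟩
        · exact hboxpair a b ha hb

/-- Truth lemma for the canonical model. -/
lemma canon_truth {φ : Form Atom Agt} (h : IsRML φ) :
    ∀ S : Set (Form Atom Agt), Good S → φ ∈ S → Sat (canonM Atom Agt) S φ := by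
  induction h with
  | pos p => intro S _ hφ; exact hφ
  | neg p =>
    intro S hG hφ
    intro hmem
    obtain ⟨M, hs, w, h1, h2⟩ := hG.2 _ hmem _ hφ
    exact h2 h1
  | @box i χ hχ ih =>
    intro S hG hφ
    intro T hT
    have hχT : χ ∈ T := by
      rcases hT with rfl | ⟨ψ, hψ, rfl⟩
      · exact hφ
      · exact Set.mem_insert_of_mem _ hφ
    exact ih T (good_step hG hT) hχT
  | @dia i χ hχ ih =>
    intro S hG hφ
    show ¬ ∀ T, (canonM Atom Agt).R i S T → ¬ Sat (canonM Atom Agt) T χ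
    push_neg
    refine ⟨insert χ {ρ | Form.box i ρ ∈ S}, Or.inr ⟨χ, hφ, rfl⟩, ?_⟩
    exact ih _ (good_step hG (Or.inr ⟨χ, hφ, rfl⟩)) (Set.mem_insert _ _)

/-- Pairwise consistency implies consistency for sets of RMLs. -/
lemma pairwise_consistent {S : Set (Form Atom Agt)} (hG : Good S) : Consistent S :=
  ⟨canonM Atom Agt, canonM_serial, S, fun φ hφ => canon_truth (hG.1 φ hφ) S hG hφ⟩

end Canon

section Main

variable {Atom Agt : Type}

lemma upSet_rml {P : Set (Form Atom Agt)} : ∀ χ ∈ upSet P, IsRML χ := fun _ h => h.1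

lemma erase_base_rml {P Q : Set (Form Atom Agt)} :
    ∀ χ ∈ upSet P \ downSet Q, IsRML χ := fun χ h => h.1.1

lemma update_base_rml {P Q : Set (Form Atom Agt)} (hQ : IsPEKB Q) :
    ∀ χ ∈ eraseKB P (negKB Q) ∪ Q, IsRML χ := by
  rintro χ (h | h)
  · exact (maxSet_subset _ h).1.1
  · exact hQ.2 χ h

/-- The update entails its base set. -/
lemma update_entails_base {P Q : Set (Form Atom Agt)} (hQ : IsPEKB Q) :
    KBEntails (updateKB P Q) (eraseKB P (negKB Q) ∪ Q) :=
  kbEntails_maxSet (update_base_rml hQ)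

/-- The update entails every member of the pre-max erase set. -/
lemma update_entails_eraseBase {P Q : Set (Form Atom Agt)} (hQ : IsPEKB Q)
    {φ : Form Atom Agt} (hφ : φ ∈ upSet P \ downSet (negKB Q)) :
    SetEntails (updateKB P Q) φ := by
  have h1 : KBEntails (updateKB P Q) (eraseKB P (negKB Q)) :=
    fun χ hχ => update_entails_base hQ χ (Or.inl hχ)
  exact kbEntails_trans' h1 (kbEntails_maxSet (erase_base_rml (Q := negKB Q)) φ hφ)

/-- The update of consistent PEKBs is consistent. -/
lemma update_consistent {P Q : Set (Form Atom Agt)} (hQ : IsPEKB Q)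
    (hPc : Consistent P) (hQc : Consistent Q) : Consistent (updateKB P Q) := by
  have hGood : Good (eraseKB P (negKB Q) ∪ Q) := by
    constructor
    · exact update_base_rml hQ
    · have key : ∀ a ∈ eraseKB P (negKB Q), ∀ b ∈ Q,
          ∃ M : Kripke Atom Agt, M.Serial ∧ ∃ w, Sat M w a ∧ Sat M w b := by
        intro a ha b hb
        have haA := maxSet_subset _ ha
        have hnd : a ∉ downSet (negKB Q) := haA.2
        have hna : ¬ Entails a (nnfNeg b) := by
          intro hent
          exact hnd ⟨haA.1.1, nnfNeg b, ⟨b, hb, rfl⟩, hent⟩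
        obtain ⟨M, hs, w, hwa, hwn⟩ := not_entails hna
        refine ⟨M, hs, w, hwa, ?_⟩
        by_contra hnb
        exact hwn ((nnfNeg_sat (hQ.2 b hb) M w).2 hnb)
      rintro a (ha | ha) b (hb | hb)
      · obtain ⟨M, hs, w, hw⟩ := hPc
        have sat : ∀ c ∈ eraseKB P (negKB Q), Sat M w c := by
          intro c hc
          obtain ⟨_, ⟨ρ, hρ, hent⟩⟩ := (maxSet_subset _ hc).1
          exact entails_def.1 hent M hs w (hw ρ hρ)
        exact ⟨M, hs, w, sat a ha, sat b hb⟩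
      · exact key a ha b hb
      · obtain ⟨M, hs, w, h1, h2⟩ := key b hb a ha
        exact ⟨M, hs, w, h2, h1⟩
      · obtain ⟨M, hs, w, hw⟩ := hQc
        exact ⟨M, hs, w, hw a ha, hw b hb⟩
  obtain ⟨M, hs, w, hw⟩ := pairwise_consistent hGood
  exact ⟨M, hs, w, fun χ hχ => hw χ (maxSet_subset _ hχ)⟩

/-- One direction of U6. -/
lemma u6_dir {P Q R : Set (Form Atom Agt)}
    (hQ : IsPEKB Q) (hR : IsPEKB R)
    (hPc : Consistent P) (hQc : Consistent Q) (hRc : Consistent R)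
    (h1 : KBEntails (updateKB P Q) R) (h2 : KBEntails (updateKB P R) Q) :
    KBEntails (updateKB P Q) (updateKB P R) := by
  intro φ hφ
  rcases maxSet_subset _ hφ with hφE | hφR
  · -- φ comes from the erase part of `P ⋄ R`
    obtain ⟨hup, hdownR⟩ := maxSet_subset _ hφE
    have hdownQ : φ ∉ downSet (negKB Q) := by
      rintro ⟨hRMLφ, ψ', ⟨ψ₀, hψ₀, rfl⟩, hent⟩
      obtain ⟨M, hs, w, hw⟩ := update_consistent hR hPc hRc
      have hsatφ : Sat M w φ :=
        update_entails_eraseBase hR (maxSet_subset _ hφE) M hs w hw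
      have hsatψ : Sat M w ψ₀ := h2 ψ₀ hψ₀ M hs w hw
      have hsatn : Sat M w (nnfNeg ψ₀) := entails_def.1 hent M hs w hsatφ
      exact (nnfNeg_sat (hQ.2 ψ₀ hψ₀) M w).1 hsatn hsatψ
    exact update_entails_eraseBase hQ ⟨hup, hdownQ⟩
  · exact h1 φ hφR

end Main

/-- KM update postulate U6 for PEKB belief update on consistent
PEKBs: if `P ⋄ Q ⊨ R` and `P ⋄ R ⊨ Q`, then `P ⋄ Q ≡ P ⋄ R`. -/
theorem km_update_u6 {Atom Agt : Type}
    (P Q R : Set (Form Atom Agt))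
    (hP : IsPEKB P) (hQ : IsPEKB Q) (hR : IsPEKB R)
    (hPc : Consistent P) (hQc : Consistent Q) (hRc : Consistent R)
    (h1 : KBEntails (updateKB P Q) R) (h2 : KBEntails (updateKB P R) Q) :
    KBEquiv (updateKB P Q) (updateKB P R) :=
  ⟨u6_dir hQ hR hPc hQc hRc h1 h2, u6_dir hR hQ hPc hRc hQc h2 h1⟩
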